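/- Soundness of suffix-summary pruning (second half of the paper's Theorem 1): let π₁, …, π_k be lists of instructions (the previously explored suffixes from a program location) with outcome postconditions Q₁, …, Q_k : (Var → Val) → Prop, and define the suffix summary WP : (Var → Val) → Prop by WP s := ∃ j, wp π_j Q_j s. Let pcon : (Var → Val) → Prop be a path condition. If the conjunction pcon ∧ ¬WP is unsatisfiable (there is no state s with pcon s and ¬ WP s), then for every state s satisfying pcon there exist an index j and a state s' such that run π_j s = some s' and Q_j s' holds; that is, continuing execution from any state satisfying pcon only reproduces a previously explored suffix together with its previously observed outcome, so the execution can be safely skipped. -/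
import Mathlib


/-- An instruction is either `assume c` for a guard `c`, or an assignment `v := e`. -/
inductive Instr (Var Val : Type) where
  | assume (c : (Var → Val) → Prop)
  | assign (v : Var) (e : (Var → Val) → Val)

open Classical in
/-- Execution of a list of instructions from a state. -/
noncomputable def run {Var Val : Type} [DecidableEq Var] :
    List (Instr Var Val) → (Var → Val) → Option (Var → Val)
  | [], s => some s
  | (Instr.assume c) :: π, s => if c s then run π s else none
  | (Instr.assign v e) :: π, s => run π (Function.update s v (e s))

/-- Weakest precondition of a list of instructions w.r.t. a postcondition. -/
def wp {Var Val : Type} [DecidableEq Var] :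
    List (Instr Var Val) → ((Var → Val) → Prop) → (Var → Val) → Prop
  | [], Q => Q
  | (Instr.assume c) :: π, Q => fun s => c s ∧ wp π Q s
  | (Instr.assign v e) :: π, Q => fun s => wp π Q (Function.update s v (e s))


theorem wp_sound {Var Val : Type} [DecidableEq Var] :
    ∀ (π : List (Instr Var Val)) (Q : (Var → Val) → Prop) (s : Var → Val),
      wp π Q s → ∃ s', run π s = some s' ∧ Q s'
  | [], Q, s, h => ⟨s, rfl, h⟩
  | (Instr.assume c) :: π, Q, s, h => by
      obtain ⟨hc, hw⟩ := h
      simpa [run, hc] using wp_sound π Q s hw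
  | (Instr.assign v e) :: π, Q, s, h => by
      simpa [run] using wp_sound π Q _ h

/-- soundness of suffix-summary pruning: if the path condition
conjoined with the negated suffix summary is unsatisfiable, then from every
state satisfying the path condition, execution only reproduces a previously
explored suffix with its previously observed outcome. -/
theorem suffix_summary_pruning_sound {Var Val : Type} [DecidableEq Var]
    (k : ℕ) (π : Fin k → List (Instr Var Val))
    (Q : Fin k → (Var → Val) → Prop)
    (WP : (Var → Val) → Prop)
    (hWP : ∀ s : Var → Val, WP s ↔ ∃ j : Fin k, wp (π j) (Q j) s)
    (pcon : (Var → Val) → Prop)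
    (hunsat : ¬ ∃ s : Var → Val, pcon s ∧ ¬ WP s) :
    ∀ s : Var → Val, pcon s →
      ∃ (j : Fin k) (s' : Var → Val), run (π j) s = some s' ∧ Q j s' := by
  intro s hs
  push_neg at hunsat
  obtain ⟨j, hj⟩ := (hWP s).1 (hunsat s hs)
  obtain ⟨s', h1, h2⟩ := wp_sound (π j) (Q j) s hj
  exact ⟨j, s', h1, h2⟩
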